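/- arXiv:1112.2373 — 9 statements merged into one kernel-verified Lean document; each statement's English description precedes it below -/
import Mathlib

section
/- Let X be a topological space such that for every countable A ⊆ B(X) (Borel real-valued functions with the pointwise topology), every f in the closure of A lies in the closure of A under partial limits of sequences. Then for every countable family 𝒰 of Borel subsets of X that is an ω-cover of X (X ∉ 𝒰, every finite subset of X is contained in some member of 𝒰), X belongs to LI(𝒰), the closure of 𝒰 under the liminf operator on sequences of sets. -/
/-!
Apply the hypothesis to the indicators `1_U`, `U ∈ 𝒰`: since `𝒰` is an ω-cover, the constant
function `1` lies in their pointwise closure, so it is obtained from them by iterated partial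
limits. By induction along this construction every function produced takes only the values
`0` and `1`, and the set where it equals `1` is contained in a member of `LI 𝒰`: a partial limit
equals `1` exactly where the terms are eventually `1`, i.e. on the liminf of the sets where the
terms equal `1`. For the constant `1` this set is all of `X`.
-/

def SetLiminf {X : Type*} (B : ℕ → Set X) : Set X := ⋃ m, ⋂ n, ⋂ _ : m ≤ n, B n

inductive LI {X : Type*} (𝒰 : Set (Set X)) : Set X → Prop
  | base {U} : U ∈ 𝒰 → LI 𝒰 U
  | lim (B : ℕ → Set X) : (∀ n, LI 𝒰 (B n)) → LI 𝒰 (SetLiminf B)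

open Classical in
/-- The partial limit of a sequence of partial functions: defined at `x` iff the values
`f n x` are eventually defined and convergent, with value the limit. -/
noncomputable def partialLim {X : Type*} (f : ℕ → X → Option ℝ) : X → Option ℝ := fun x =>
  if h : (∀ᶠ n in Filter.atTop, (f n x).isSome) ∧
      ∃ y : ℝ, Filter.Tendsto (fun n => (f n x).getD 0) Filter.atTop (nhds y)
  then some h.2.choose else none

/-- The closure of a family of partial functions under partial limits of sequences. -/
inductive Partlims {X : Type*} (A : Set (X → Option ℝ)) : (X → Option ℝ) → Prop
  | base {f} : f ∈ A → Partlims A f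
  | lim (f : ℕ → X → Option ℝ) : (∀ n, Partlims A (f n)) → Partlims A (partialLim f)

/-- A total function viewed as a partial function. -/
def toPartial {X : Type*} (f : X → ℝ) : X → Option ℝ := fun x => some (f x)

open Filter Topology Set

section

variable {X : Type*}

theorem setLiminf_mono {A B : ℕ → Set X} (h : ∀ n, A n ⊆ B n) : SetLiminf A ⊆ SetLiminf B := by
  unfold SetLiminf
  gcongr with m n _
  exact h n

theorem partialLim_eq_some_iff {f : ℕ → X → Option ℝ} {x : X} {y : ℝ} :
    partialLim f x = some y ↔
      (∀ᶠ n in atTop, (f n x).isSome) ∧ Tendsto (fun n => (f n x).getD 0) atTop (𝓝 y) := by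
  unfold partialLim
  split_ifs with hcond
  · rw [Option.some.injEq]
    constructor
    · rintro rfl
      exact ⟨hcond.1, hcond.2.choose_spec⟩
    · exact fun hy => tendsto_nhds_unique hcond.2.choose_spec hy.2
  · exact ⟨nofun, fun hy => absurd ⟨hy.1, y, hy.2⟩ hcond⟩

theorem partialLim_mem_of_isClosed {f : ℕ → X → Option ℝ} {x : X} {y : ℝ} {S : Set ℝ}
    (hS : IsClosed S) (hf : ∀ n z, f n x = some z → z ∈ S) (hx : partialLim f x = some y) :
    y ∈ S := by
  obtain ⟨hsome, htend⟩ := partialLim_eq_some_iff.mp hx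
  refine hS.mem_of_tendsto htend (hsome.mono fun n hn => ?_)
  obtain ⟨z, hz⟩ := Option.isSome_iff_exists.mp hn
  simpa [hz] using hf n z hz

def IsZeroOne (g : X → Option ℝ) : Prop := ∀ x z, g x = some z → z = 0 ∨ z = 1

theorem isZeroOne_partialLim {f : ℕ → X → Option ℝ} (hf : ∀ n, IsZeroOne (f n)) :
    IsZeroOne (partialLim f) := fun x _ hx =>
  partialLim_mem_of_isClosed ((finite_singleton (1 : ℝ)).insert 0).isClosed (hf · x) hx

theorem IsZeroOne.eventually_eq_some_one {f : ℕ → X → Option ℝ} (hf : ∀ n, IsZeroOne (f n))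
    {x : X} (hx : partialLim f x = some 1) : ∀ᶠ n in atTop, f n x = some 1 := by
  obtain ⟨hsome, htend⟩ := partialLim_eq_some_iff.mp hx
  have hbig : ∀ᶠ n in atTop, (f n x).getD 0 ∈ Ioi (1 / 2 : ℝ) :=
    htend.eventually_mem (Ioi_mem_nhds (by norm_num))
  filter_upwards [hsome, hbig] with n hn hnbig
  obtain ⟨z, hz⟩ := Option.isSome_iff_exists.mp hn
  rw [hz, Option.getD_some, mem_Ioi] at hnbig
  rcases hf n x z hz with rfl | rfl
  · norm_num at hnbig
  · exact hz

theorem IsZeroOne.setOf_partialLim_eq_one_subset {f : ℕ → X → Option ℝ}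
    (hf : ∀ n, IsZeroOne (f n)) :
    {x | partialLim f x = some 1} ⊆ SetLiminf fun n => {x | f n x = some 1} := fun x hx => by
  obtain ⟨m, hm⟩ := eventually_atTop.mp (IsZeroOne.eventually_eq_some_one hf hx)
  simp only [SetLiminf, mem_iUnion, mem_iInter]
  exact ⟨m, hm⟩

theorem one_mem_closure_indicator_image {𝒰 : Set (Set X)} [TopologicalSpace X]
    (h𝒰 : ∀ F : Set X, F.Finite → ∃ U ∈ 𝒰, F ⊆ U) :
    (1 : X → ℝ) ∈ closure ((fun U => U.indicator 1) '' 𝒰) := by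
  rw [mem_closure_iff]
  intro O hO h1O
  obtain ⟨I, u, hu, hIO⟩ := isOpen_pi_iff.mp hO 1 h1O
  obtain ⟨U, hU, hIU⟩ := h𝒰 I I.finite_toSet
  refine ⟨U.indicator 1, hIO fun x hx => ?_, U, hU, rfl⟩
  simpa [indicator_of_mem (hIU hx)] using (hu x hx).2

theorem Partlims.isZeroOne_and_exists_LI {𝒰 : Set (Set X)} {g : X → Option ℝ}
    (hg : Partlims (toPartial '' ((fun U => U.indicator 1) '' 𝒰)) g) :
    IsZeroOne g ∧ ∃ B, LI 𝒰 B ∧ {x | g x = some 1} ⊆ B := by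
  induction hg with
  | base hg =>
    obtain ⟨_, ⟨U, hU, rfl⟩, rfl⟩ := hg
    refine ⟨fun x z hz => ?_, U, LI.base hU, fun x hx => ?_⟩
    · by_cases hxU : x ∈ U <;> simp_all [toPartial, eq_comm]
    · by_contra hxU
      simp [toPartial, indicator_of_notMem hxU] at hx
  | lim f _ ih =>
    choose hf B hB hsub using ih
    exact ⟨isZeroOne_partialLim hf, SetLiminf B, LI.lim B hB,
      (IsZeroOne.setOf_partialLim_eq_one_subset hf).trans (setLiminf_mono hsub)⟩

end

theorem stmt5_general {X : Type*} [TopologicalSpace X] [MeasurableSpace X]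
    (h : ∀ A : Set (X → ℝ), A.Countable → (∀ g ∈ A, Measurable g) →
      ∀ f : X → ℝ, Measurable f → f ∈ closure A →
        Partlims (toPartial '' A) (toPartial f)) :
    ∀ 𝒰 : Set (Set X), 𝒰.Countable → (∀ U ∈ 𝒰, MeasurableSet U) →
      (∀ U ∈ 𝒰, U ≠ Set.univ) → (∀ F : Set X, F.Finite → ∃ U ∈ 𝒰, F ⊆ U) →
      LI 𝒰 Set.univ := by
  intro 𝒰 h𝒰_countable h𝒰_measurable _ h𝒰_omega
  have hpartlims := h _ (h𝒰_countable.image _)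
    (forall_mem_image.mpr fun U hU => measurable_one.indicator (h𝒰_measurable U hU))
    1 measurable_one (one_mem_closure_indicator_image h𝒰_omega)
  obtain ⟨-, B, hB, hone⟩ := hpartlims.isZeroOne_and_exists_LI
  rwa [eq_univ_of_univ_subset fun x _ => hone rfl] at hB

theorem stmt5 {X : Type*} [TopologicalSpace X] [MeasurableSpace X] [BorelSpace X]
    (h : ∀ A : Set (X → ℝ), A.Countable → (∀ g ∈ A, Measurable g) →
      ∀ f : X → ℝ, Measurable f → f ∈ closure A →
        Partlims (toPartial '' A) (toPartial f)) :
    ∀ 𝒰 : Set (Set X), 𝒰.Countable → (∀ U ∈ 𝒰, MeasurableSet U) →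
      (∀ U ∈ 𝒰, U ≠ Set.univ) → (∀ F : Set X, F.Finite → ∃ U ∈ 𝒰, F ⊆ U) →
      LI 𝒰 Set.univ :=
  stmt5_general h
end

section
/- Let X be a topological space with the property that for every countable Borel ω-cover 𝒰 of X there exist U_1, U_2, … ∈ 𝒰 with X = liminf_n U_n. Then for every countable A ⊆ B(X), every f in the pointwise closure of A is the pointwise limit of a sequence of elements of A. -/
/-!
Split according to whether `X` has finitely many measurable atoms. If it does, measurable
functions are determined by their values at finitely many representatives, and closure in
finitely many coordinates is sequential. Otherwise, points with distinct atoms yield measurable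
nonempty sets `R₀ ⊇ R₁ ⊇ ⋯` with empty intersection. The sets
`{x | dist (g x) (f x) < 1 / (n + 1)} \ Rₙ`, `g ∈ A`, form a Borel ω-cover; along a sequence of
them with liminf `X` the levels `n` tend to infinity (every `Rₙ` is nonempty), so the
corresponding functions `g` converge pointwise to `f`.
-/

open Set Filter Topology

theorem mem_setLiminf_iff {X : Type*} {U : ℕ → Set X} {x : X} :
    x ∈ SetLiminf U ↔ ∀ᶠ n in atTop, x ∈ U n := by
  simp [SetLiminf, eventually_atTop]

theorem exists_mem_forall_dist_lt_of_mem_closure {X E : Type*} [PseudoMetricSpace E]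
    {A : Set (X → E)} {f : X → E} (hf : f ∈ closure A) {F : Set X} (hF : F.Finite)
    {ε : ℝ} (hε : 0 < ε) : ∃ g ∈ A, ∀ x ∈ F, dist (g x) (f x) < ε := by
  have hO : (⋂ x ∈ F, (fun g : X → E => g x) ⁻¹' Metric.ball (f x) ε) ∈ 𝓝 f :=
    (biInter_mem hF).2 fun x _ => (continuous_apply x).continuousAt (Metric.ball_mem_nhds _ hε)
  obtain ⟨g, hgO, hgA⟩ := mem_closure_iff_nhds.1 hf _ hO
  exact ⟨g, hgA, fun x hx => mem_iInter₂.1 hgO x hx⟩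

theorem Measurable.eq_of_mem_measurableAtom {X E : Type*} [MeasurableSpace X] [MeasurableSpace E]
    [MeasurableSingletonClass E] {g : X → E} (hg : Measurable g) {x y : X}
    (hy : y ∈ measurableAtom x) : g y = g x :=
  mem_of_mem_measurableAtom hy (hg (measurableSet_singleton (g x))) rfl

theorem exists_seq_tendsto_of_finite_range_measurableAtom {X E : Type*} [MeasurableSpace X]
    [TopologicalSpace E] [FirstCountableTopology E] [MeasurableSpace E] [MeasurableSingletonClass E]
    (hfin : (range (measurableAtom : X → Set X)).Finite) {A : Set (X → E)}
    (hA : ∀ g ∈ A, Measurable g) {f : X → E} (hf : Measurable f) (hfA : f ∈ closure A) :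
    ∃ g : ℕ → X → E, (∀ n, g n ∈ A) ∧ ∀ x, Tendsto (fun n => g n x) atTop (𝓝 (f x)) := by
  have := hfin.to_subtype
  set rep := rangeSplitting (measurableAtom : X → Set X)
  have hres : Continuous fun (g : X → E) (a : range (measurableAtom : X → Set X)) => g (rep a) :=
    continuous_pi fun a => continuous_apply (rep a)
  obtain ⟨u, hu, hlim⟩ := mem_closure_iff_seq_limit.1 (mem_closure_image hres.continuousAt hfA)
  choose g hgA hgu using hu
  refine ⟨g, hgA, fun x => ?_⟩
  have hx : x ∈ measurableAtom (rep ⟨_, mem_range_self x⟩) := by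
    rw [apply_rangeSplitting measurableAtom]
    exact mem_measurableAtom_self x
  simp only [(hA _ (hgA _)).eq_of_mem_measurableAtom hx, hf.eq_of_mem_measurableAtom hx]
  simpa [← hgu] using tendsto_pi_nhds.1 hlim ⟨_, mem_range_self x⟩

theorem exists_antitone_nonempty_iInter_eq_empty_of_infinite_range_measurableAtom
    {X : Type*} [MeasurableSpace X] (hinf : (range (measurableAtom : X → Set X)).Infinite) :
    ∃ R : ℕ → Set X, (∀ n, MeasurableSet (R n)) ∧ Antitone R ∧ (∀ n, (R n).Nonempty) ∧
      ⋂ n, R n = ∅ := by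
  set e := hinf.natEmbedding
  set x : ℕ → X := fun i => rangeSplitting measurableAtom (e i)
  have hsep : ∀ i j, i ≠ j → ∃ s, x i ∈ s ∧ MeasurableSet s ∧ x j ∉ s := by
    intro i j hij
    have hx : x j ∉ measurableAtom (x i) := fun hmem => hij <| e.injective <| Subtype.ext <| by
      simpa [x, apply_rangeSplitting] using (measurableAtom_eq_of_mem hmem).symm
    simpa [measurableAtom] using hx
  choose! s hs using hsep
  set C : ℕ → Set X := fun i => ⋂ j ∈ {j | i ≠ j}, s i j
  have hCm : ∀ i, MeasurableSet (C i) := fun i =>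
    .biInter (to_countable _) fun j hj => (hs i j hj).2.1
  have hxC : ∀ i, x i ∈ C i := fun i => mem_iInter₂.2 fun j hj => (hs i j hj).1
  have hxC' : ∀ i j, i ≠ j → x j ∉ C i := fun i j hij hj =>
    (hs i j hij).2.2 (mem_iInter₂.1 hj j hij)
  refine ⟨fun n => (⋃ i, C i) \ ⋃ k ≤ n, C k, fun n => ?_, fun m n hmn => ?_, fun n => ?_, ?_⟩
  · exact (MeasurableSet.iUnion hCm).diff (.biUnion (to_countable _) fun k _ => hCm k)
  · exact sdiff_subset_sdiff_right (biUnion_subset_biUnion_left fun k hk => le_trans hk hmn)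
  · refine ⟨x (n + 1), mem_iUnion.2 ⟨_, hxC _⟩, ?_⟩
    simp only [mem_iUnion, not_exists]
    exact fun k hk => hxC' k _ (by omega)
  · refine eq_empty_of_forall_notMem fun y hy => ?_
    obtain ⟨i, hi⟩ := mem_iUnion.1 (mem_iInter.1 hy 0).1
    exact (mem_iInter.1 hy i).2 (mem_iUnion₂.2 ⟨i, le_rfl, hi⟩)

theorem eventually_notMem_of_antitone_of_iInter_eq_empty {X : Type*} {R : ℕ → Set X}
    (hR : Antitone R) (hRe : ⋂ n, R n = ∅) (x : X) : ∀ᶠ n in atTop, x ∉ R n := by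
  obtain ⟨N, hN⟩ : ∃ N, x ∉ R N := by simpa using (eq_empty_iff_forall_notMem.1 hRe x)
  exact eventually_atTop.2 ⟨N, fun n hn hx => hN (hR hn hx)⟩

theorem exists_seq_tendsto_of_antitone_nonempty_iInter_eq_empty {X E : Type*} [MeasurableSpace X]
    [PseudoMetricSpace E] [SecondCountableTopology E] [MeasurableSpace E] [OpensMeasurableSpace E]
    (h : ∀ 𝒰 : Set (Set X), 𝒰.Countable → (∀ U ∈ 𝒰, MeasurableSet U) →
      (∀ U ∈ 𝒰, U ≠ Set.univ) → (∀ F : Set X, F.Finite → ∃ U ∈ 𝒰, F ⊆ U) →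
      ∃ U : ℕ → Set X, (∀ n, U n ∈ 𝒰) ∧ SetLiminf U = Set.univ)
    {R : ℕ → Set X} (hRm : ∀ n, MeasurableSet (R n)) (hR : Antitone R)
    (hRne : ∀ n, (R n).Nonempty) (hRe : ⋂ n, R n = ∅)
    {A : Set (X → E)} (hAc : A.Countable) (hA : ∀ g ∈ A, Measurable g) {f : X → E}
    (hf : Measurable f) (hfA : f ∈ closure A) :
    ∃ g : ℕ → X → E, (∀ n, g n ∈ A) ∧ ∀ x, Tendsto (fun n => g n x) atTop (𝓝 (f x)) := by
  set W : (X → E) → ℕ → Set X := fun g n => {x | dist (g x) (f x) < 1 / (n + 1)} \ R n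
  obtain ⟨U, hU𝒰, hU⟩ := h (image2 W A univ) (hAc.image2 countable_univ _)
    (by
      rintro _ ⟨g, hg, n, -, rfl⟩
      exact (measurableSet_lt ((hA g hg).dist hf) measurable_const).diff (hRm n))
    (by
      rintro _ ⟨g, -, n, -, rfl⟩ hWn
      obtain ⟨z, hz⟩ := hRne n
      exact (hWn.symm ▸ mem_univ z : z ∈ W g n).2 hz)
    (by
      intro F hF
      obtain ⟨n, hn⟩ : ∃ n, ∀ x ∈ F, x ∉ R n :=
        ((eventually_all_finite hF).2 fun x _ =>
          eventually_notMem_of_antitone_of_iInter_eq_empty hR hRe x).exists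
      obtain ⟨g, hg, hgF⟩ := exists_mem_forall_dist_lt_of_mem_closure hfA hF Nat.one_div_pos_of_nat
      exact ⟨W g n, mem_image2_of_mem hg (mem_univ n), fun x hx => ⟨hgF x hx, hn x hx⟩⟩)
  choose g hgA m _ hgm using hU𝒰
  have hev : ∀ x, ∀ᶠ n in atTop, x ∈ W (g n) (m n) := fun x => by
    simpa only [hgm] using mem_setLiminf_iff.1 (hU ▸ mem_univ x)
  have hm : Tendsto m atTop atTop := by
    refine tendsto_atTop.2 fun M => ?_
    obtain ⟨z, hz⟩ := hRne M
    filter_upwards [hev z] with n hn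
    by_contra! hlt
    exact hn.2 (hR hlt.le hz)
  refine ⟨g, hgA, fun x => tendsto_iff_dist_tendsto_zero.2 ?_⟩
  refine squeeze_zero' (.of_forall fun n => dist_nonneg) ?_
    (tendsto_one_div_add_atTop_nhds_zero_nat.comp hm)
  filter_upwards [hev x] with n hn
  exact hn.1.le

theorem stmt8_general {X : Type*} [MeasurableSpace X]
    (h : ∀ 𝒰 : Set (Set X), 𝒰.Countable → (∀ U ∈ 𝒰, MeasurableSet U) →
      (∀ U ∈ 𝒰, U ≠ Set.univ) → (∀ F : Set X, F.Finite → ∃ U ∈ 𝒰, F ⊆ U) →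
      ∃ U : ℕ → Set X, (∀ n, U n ∈ 𝒰) ∧ SetLiminf U = Set.univ) :
    ∀ A : Set (X → ℝ), A.Countable → (∀ g ∈ A, Measurable g) →
      ∀ f : X → ℝ, Measurable f → f ∈ closure A →
        ∃ g : ℕ → X → ℝ, (∀ n, g n ∈ A) ∧
          ∀ x, Filter.Tendsto (fun n => g n x) Filter.atTop (nhds (f x)) := by
  intro A hAc hA f hf hfA
  rcases (range (measurableAtom : X → Set X)).finite_or_infinite with hfin | hinf
  · exact exists_seq_tendsto_of_finite_range_measurableAtom hfin hA hf hfA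
  · obtain ⟨R, hRm, hR, hRne, hRe⟩ :=
      exists_antitone_nonempty_iInter_eq_empty_of_infinite_range_measurableAtom hinf
    exact exists_seq_tendsto_of_antitone_nonempty_iInter_eq_empty h hRm hR hRne hRe hAc hA hf hfA

theorem stmt8 {X : Type*} [TopologicalSpace X] [MeasurableSpace X] [BorelSpace X]
    (h : ∀ 𝒰 : Set (Set X), 𝒰.Countable → (∀ U ∈ 𝒰, MeasurableSet U) →
      (∀ U ∈ 𝒰, U ≠ Set.univ) → (∀ F : Set X, F.Finite → ∃ U ∈ 𝒰, F ⊆ U) →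
      ∃ U : ℕ → Set X, (∀ n, U n ∈ 𝒰) ∧ SetLiminf U = Set.univ) :
    ∀ A : Set (X → ℝ), A.Countable → (∀ g ∈ A, Measurable g) →
      ∀ f : X → ℝ, Measurable f → f ∈ closure A →
        ∃ g : ℕ → X → ℝ, (∀ n, g n ∈ A) ∧
          ∀ x, Filter.Tendsto (fun n => g n x) Filter.atTop (nhds (f x)) :=
  stmt8_general h
end

section
/- If X is an uncountable topological space in which every singleton is a Borel set, then the space B(X) of Borel real-valued functions on X, with the topology of pointwise convergence, is not countably tight: there is a set A ⊆ B(X) and a point in the closure of A that is not in the closure of any countable subset of A. -/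
/-!
Take `A` to be the indicator functions of finite sets. They are Borel since singletons are, and
they converge pointwise to the constant `1` along the directed set of finite sets. A countable
`D ⊆ A`, however, is supported in a countable set, the support condition is closed under
pointwise limits, and `1` is supported nowhere smaller than the uncountable `X`.
-/

open Filter Function Set Topology

theorem tendsto_finset_indicator_atTop {X M : Type*} [Zero M] [TopologicalSpace M] (f : X → M) :
    Tendsto (fun s : Finset X => (s : Set X).indicator f) atTop (𝓝 f) := by
  rw [tendsto_pi_nhds]
  intro x
  refine tendsto_const_nhds.congr' ?_
  filter_upwards [eventually_ge_atTop {x}] with s hs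
  exact (indicator_of_mem (hs (Finset.mem_singleton_self x)) f).symm

theorem mem_closure_range_finset_indicator {X M : Type*} [Zero M] [TopologicalSpace M]
    (f : X → M) : f ∈ closure (range fun s : Finset X => (s : Set X).indicator f) :=
  mem_closure_of_tendsto (tendsto_finset_indicator_atTop f) (Eventually.of_forall mem_range_self)

theorem isClosed_setOf_support_subset {X M : Type*} [Zero M] [TopologicalSpace M] [T1Space M]
    (S : Set X) : IsClosed {h : X → M | support h ⊆ S} := by
  have : {h : X → M | support h ⊆ S} = ⋂ x ∈ Sᶜ, {h | h x = 0} := by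
    ext h
    simp only [mem_ofPred_eq, support_subset_iff', mem_iInter, mem_compl_iff]
  rw [this]
  exact isClosed_biInter fun x _ => isClosed_singleton.preimage (continuous_apply x)

theorem support_subset_of_mem_closure {X M : Type*} [Zero M] [TopologicalSpace M] [T1Space M]
    {D : Set (X → M)} {h : X → M} (hh : h ∈ closure D) : support h ⊆ ⋃ g ∈ D, support g :=
  closure_minimal (fun _ hg => subset_biUnion_of_mem (u := support) hg)
    (isClosed_setOf_support_subset _) hh

theorem stmt9_general {X : Type*} [MeasurableSpace X]
    (hX : ¬ (Set.univ : Set X).Countable)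
    (hsing : ∀ x : X, MeasurableSet ({x} : Set X)) :
    ∃ A : Set (X → ℝ), (∀ g ∈ A, Measurable g) ∧
      ∃ f : X → ℝ, Measurable f ∧ f ∈ closure A ∧
        ∀ D ⊆ A, D.Countable → f ∉ closure D := by
  have : MeasurableSingletonClass X := ⟨hsing⟩
  refine ⟨range fun s : Finset X => (s : Set X).indicator 1, ?_, 1, measurable_one,
    mem_closure_range_finset_indicator 1, ?_⟩
  · rintro _ ⟨s, rfl⟩
    exact measurable_one.indicator s.measurableSet
  · intro D hDA hD hclosure
    have hsupp : (⋃ g ∈ D, support g).Countable := by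
      refine hD.biUnion fun g hg => ?_
      obtain ⟨s, rfl⟩ := hDA hg
      exact s.countable_toSet.mono support_indicator_subset
    apply hX
    simpa using hsupp.mono (support_subset_of_mem_closure hclosure)

theorem stmt9 {X : Type*} [TopologicalSpace X] [MeasurableSpace X] [BorelSpace X]
    (hX : ¬ (Set.univ : Set X).Countable)
    (hsing : ∀ x : X, MeasurableSet ({x} : Set X)) :
    ∃ A : Set (X → ℝ), (∀ g ∈ A, Measurable g) ∧
      ∃ f : X → ℝ, Measurable f ∧ f ∈ closure A ∧
        ∀ D ⊆ A, D.Countable → f ∉ closure D :=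
  stmt9_general hX hsing
end

section
/- Let X be a topological space such that for every A ⊆ C(X,ℝ), every f in the pointwise closure of A belongs to partlims(A). Then C(X,ℝ) with the pointwise topology is countably tight. -/
/-!
Every `g ∈ partlims B` is approximated, on any finite set where it is defined and to any
precision, by a single member of `B`: a partial limit is close to one of its terms at finitely
many points. Hence `partlims` of the total functions in `A` lies in the pointwise closure of `A`.
Each generation step uses only countably many predecessors, so `g` already lies in `partlims D`
for some countable `D ⊆ B`; the hypothesis applied to `A` thus gives `f ∈ partlims D ⊆ closure D`.
-/

open Filter Topology

section

variable {X : Type*}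

theorem toPartial_injective : Function.Injective (toPartial (X := X)) :=
  fun _ _ hab => funext fun x => Option.some_injective _ (congrFun hab x)

theorem partialLim_isSome_spec {f : ℕ → X → Option ℝ} {x : X}
    (hx : (partialLim f x).isSome) :
    (∀ᶠ n in atTop, (f n x).isSome) ∧
      Tendsto (fun n => (f n x).getD 0) atTop (𝓝 ((partialLim f x).getD 0)) := by
  unfold partialLim at hx ⊢
  split_ifs at hx ⊢ with hdef
  · exact ⟨hdef.1, hdef.2.choose_spec⟩
  · simp at hx

namespace Partlims

variable {B C : Set (X → Option ℝ)} {g : X → Option ℝ}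

theorem mono (hBC : B ⊆ C) (hg : Partlims B g) : Partlims C g := by
  induction hg with
  | base hf => exact .base (hBC hf)
  | lim f _ ih => exact .lim f ih

theorem exists_countable_subset (hg : Partlims B g) :
    ∃ D ⊆ B, D.Countable ∧ Partlims D g := by
  induction hg with
  | @base f hf => exact ⟨{f}, Set.singleton_subset_iff.2 hf, Set.countable_singleton f, .base rfl⟩
  | lim f _ ih =>
    choose D hDB hDc hD using ih
    exact ⟨⋃ n, D n, Set.iUnion_subset hDB, Set.countable_iUnion hDc,
      .lim f fun n => (hD n).mono (Set.subset_iUnion D n)⟩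

theorem exists_forall_dist_lt (hg : Partlims B g) {s : Set X} (hs : s.Finite)
    (hgs : ∀ x ∈ s, (g x).isSome) {ε : X → ℝ} (hε : ∀ x ∈ s, 0 < ε x) :
    ∃ b ∈ B, ∀ x ∈ s, (b x).isSome ∧ dist ((b x).getD 0) ((g x).getD 0) < ε x := by
  induction hg generalizing ε with
  | @base f hf => exact ⟨f, hf, fun x hx => ⟨hgs x hx, by simpa using hε x hx⟩⟩
  | lim f _ ih =>
    have hclose : ∀ᶠ n in atTop, ∀ x ∈ s,
        (f n x).isSome ∧ dist ((f n x).getD 0) ((partialLim f x).getD 0) < ε x / 2 := by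
      refine hs.eventually_all.2 fun x hx => ?_
      obtain ⟨hdef, hlim⟩ := partialLim_isSome_spec (hgs x hx)
      exact hdef.and (hlim.eventually (Metric.ball_mem_nhds _ (half_pos (hε x hx))))
    obtain ⟨n, hn⟩ := hclose.exists
    obtain ⟨b, hbB, hb⟩ := ih n (fun x hx => (hn x hx).1) fun x hx => half_pos (hε x hx)
    refine ⟨b, hbB, fun x hx => ⟨(hb x hx).1, ?_⟩⟩
    calc dist ((b x).getD 0) ((partialLim f x).getD 0)
        ≤ dist ((b x).getD 0) ((f n x).getD 0)
          + dist ((f n x).getD 0) ((partialLim f x).getD 0) := dist_triangle _ _ _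
      _ < ε x / 2 + ε x / 2 := add_lt_add (hb x hx).2 (hn x hx).2
      _ = ε x := add_halves (ε x)

end Partlims

theorem mem_closure_of_partlims_toPartial {A : Set (X → ℝ)} {f : X → ℝ}
    (hf : Partlims (toPartial '' A) (toPartial f)) : f ∈ closure A := by
  have hbasis := hasBasis_pi fun x => Metric.nhds_basis_ball (x := f x)
  rw [← nhds_pi] at hbasis
  rw [mem_closure_iff_nhds_basis hbasis]
  rintro ⟨I, ε⟩ ⟨hI, hε⟩
  obtain ⟨_, ⟨a, ha, rfl⟩, hfa⟩ := hf.exists_forall_dist_lt hI (fun _ _ => rfl) hε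
  exact ⟨a, ha, fun x hx => (hfa x hx).2⟩

end

theorem stmt10 {X : Type*} [TopologicalSpace X]
    (h : ∀ A : Set (X → ℝ), (∀ g ∈ A, Continuous g) →
      ∀ f : X → ℝ, Continuous f → f ∈ closure A →
        Partlims (toPartial '' A) (toPartial f)) :
    ∀ A : Set (X → ℝ), (∀ g ∈ A, Continuous g) →
      ∀ f : X → ℝ, Continuous f → f ∈ closure A →
        ∃ D ⊆ A, D.Countable ∧ f ∈ closure D := by
  intro A hA f hf hfA
  obtain ⟨D', hD'A, hD'c, hfD'⟩ := (h A hA f hf hfA).exists_countable_subset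
  obtain ⟨D, hDA, rfl⟩ := Set.subset_image_iff.1 hD'A
  exact ⟨D, hDA, (Set.mapsTo_image _ _).countable_of_injOn toPartial_injective.injOn hD'c,
    mem_closure_of_partlims_toPartial hfD'⟩
end

section
/- For arbitrary topological spaces X, the property ⟨Ω→Γ⟩ (every open ω-cover of X contains a countable subfamily that is a γ-cover) is equivalent to S₁(Ω,Γ): for every sequence of open ω-covers 𝒰_1, 𝒰_2, … of X one can choose U_n ∈ 𝒰_n such that {U_n : n ∈ ℕ} is a γ-cover of X. -/
/-- An ω-cover: a family of proper subsets such that every finite set is contained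
in some member (in particular it is a cover). -/
def IsOmegaCover {X : Type*} (𝒰 : Set (Set X)) : Prop :=
  (∀ U ∈ 𝒰, U ≠ Set.univ) ∧ ∀ F : Set X, F.Finite → ∃ U ∈ 𝒰, F ⊆ U

open Filter Set

lemma mem_setLiminf_iff_eventually {X : Type*} {B : ℕ → Set X} {x : X} :
    x ∈ SetLiminf B ↔ ∀ᶠ n in atTop, x ∈ B n := by
  simp [SetLiminf, eventually_atTop]

lemma setLiminf_eq_univ_iff {X : Type*} {B : ℕ → Set X} :
    SetLiminf B = univ ↔ ∀ x, ∀ᶠ n in atTop, x ∈ B n := by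
  simp [eq_univ_iff_forall, mem_setLiminf_iff_eventually]

lemma tendsto_atTop_of_subset_of_ne_univ {X : Type*} {W C : ℕ → Set X} {a : ℕ → ℕ}
    (hW : ∀ b, W b ≠ univ) (hC : SetLiminf C = univ) (hCW : ∀ t, C t ⊆ W (a t)) :
    Tendsto a atTop atTop := by
  have hne : ∀ b, ∀ᶠ t in atTop, a t ≠ b := by
    intro b
    obtain ⟨x, hx⟩ := (ne_univ_iff_exists_notMem _).1 (hW b)
    filter_upwards [setLiminf_eq_univ_iff.1 hC x] with t ht hab
    exact hx (hab ▸ hCW t ht)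
  refine tendsto_atTop.2 fun n => ?_
  filter_upwards [(eventually_all_finset (Finset.range n)).2 fun b _ => hne b] with t ht
  by_contra! hlt
  exact ht (a t) (Finset.mem_range.2 hlt) rfl

section Diagonal

variable {X : Type*}

def diagonalFamily (W : ℕ → Set X) (𝒰 : ℕ → Set (Set X)) : Set (Set X) :=
  {S | ∃ a, ∃ V : ℕ → Set X, (∀ i, V i ∈ 𝒰 i) ∧ S = W a ∩ ⋂ i < a, V i}

lemma isOpen_of_mem_diagonalFamily [TopologicalSpace X] {W : ℕ → Set X}
    {𝒰 : ℕ → Set (Set X)} (hW : ∀ n, IsOpen (W n)) (h𝒰 : ∀ n, ∀ U ∈ 𝒰 n, IsOpen U) :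
    ∀ S ∈ diagonalFamily W 𝒰, IsOpen S := by
  rintro S ⟨a, V, hV, rfl⟩
  exact (hW a).inter <| (finite_Iio a).isOpen_biInter fun i _ => h𝒰 i (V i) (hV i)

lemma isOmegaCover_diagonalFamily {W : ℕ → Set X} {𝒰 : ℕ → Set (Set X)}
    (hW : ∀ n, W n ≠ univ) (hWγ : SetLiminf W = univ) (h𝒰 : ∀ n, IsOmegaCover (𝒰 n)) :
    IsOmegaCover (diagonalFamily W 𝒰) := by
  constructor
  · rintro S ⟨a, V, -, rfl⟩ hS
    exact hW a (eq_univ_of_univ_subset (hS ▸ inter_subset_left))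
  · intro F hF
    obtain ⟨a, haF⟩ := ((hF.eventually_all).2 fun x _ => setLiminf_eq_univ_iff.1 hWγ x).exists
    choose V hV hFV using fun i => (h𝒰 i).2 F hF
    refine ⟨_, ⟨a, V, hV, rfl⟩, fun x hx => ⟨haF x hx, ?_⟩⟩
    exact mem_iInter₂.2 fun i _ => hFV i hx

lemma exists_gammaCover_of_diagonalFamily {W : ℕ → Set X} {𝒰 : ℕ → Set (Set X)}
    (hW : ∀ n, W n ≠ univ) {C : ℕ → Set X} (hC : ∀ t, C t ∈ diagonalFamily W 𝒰)
    (hCγ : SetLiminf C = univ) :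
    ∃ U : ℕ → Set X, (∀ n, U n ∈ 𝒰 n) ∧ SetLiminf U = univ := by
  choose a V hV hCeq using hC
  have ha : Tendsto a atTop atTop :=
    tendsto_atTop_of_subset_of_ne_univ hW hCγ fun t => (hCeq t).trans_subset inter_subset_left
  obtain ⟨φ, hφ, hφa⟩ := extraction_forall_of_eventually fun n => ha.eventually_gt_atTop n
  refine ⟨fun n => V (φ n) n, fun n => hV (φ n) n, setLiminf_eq_univ_iff.2 fun x => ?_⟩
  filter_upwards [hφ.tendsto_atTop.eventually (setLiminf_eq_univ_iff.1 hCγ x)] with n hn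
  rw [hCeq] at hn
  exact mem_iInter₂.1 hn.2 n (hφa n)

end Diagonal

theorem stmt12 {X : Type*} [TopologicalSpace X] :
    (∀ 𝒰 : Set (Set X), (∀ U ∈ 𝒰, IsOpen U) → IsOmegaCover 𝒰 →
      ∃ U : ℕ → Set X, (∀ n, U n ∈ 𝒰) ∧ SetLiminf U = Set.univ) ↔
    (∀ 𝒰 : ℕ → Set (Set X),
      (∀ n, (∀ U ∈ 𝒰 n, IsOpen U) ∧ IsOmegaCover (𝒰 n)) →
      ∃ U : ℕ → Set X, (∀ n, U n ∈ 𝒰 n) ∧ SetLiminf U = Set.univ) := by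
  refine ⟨fun h 𝒰 h𝒰 => ?_, fun h 𝒰 hopen hω => h (fun _ => 𝒰) fun _ => ⟨hopen, hω⟩⟩
  obtain ⟨W, hW𝒰, hWγ⟩ := h (𝒰 0) (h𝒰 0).1 (h𝒰 0).2
  have hW : ∀ n, W n ≠ univ := fun n => (h𝒰 0).2.1 _ (hW𝒰 n)
  obtain ⟨C, hC, hCγ⟩ := h (diagonalFamily W 𝒰)
    (isOpen_of_mem_diagonalFamily (fun n => (h𝒰 0).1 _ (hW𝒰 n)) fun n => (h𝒰 n).1)
    (isOmegaCover_diagonalFamily hW hWγ fun n => (h𝒰 n).2)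
  exact exists_gammaCover_of_diagonalFamily hW hC hCγ
end

section
/- Let X be a Tychonoff space such that for every A ⊆ C(X,ℝ), every f in the pointwise closure of A belongs to partlims(A). Then X is zero-dimensional: the clopen sets form a base for the topology. In particular, the closed interval [0,1] is not a continuous image of any such space. -/
open MeasureTheory Filter Set Metric
open scoped ENNReal NNReal Topology

lemma exists_continuous_eqOn_one_measure_pos_lt {α : Type*} [PseudoEMetricSpace α]
    [MeasurableSpace α] [OpensMeasurableSpace α] {μ : Measure α} {s : Set α}
    (hs : μ (closure s) = 0) (hfin : ∃ R > 0, μ (thickening R s) ≠ ∞) {ε : ℝ≥0∞} (hε : 0 < ε) :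
    ∃ g : α → ℝ, Continuous g ∧ EqOn g 1 s ∧ μ {x | 0 < g x} < ε := by
  have hsmall : ∀ᶠ δ in 𝓝[>] 0, μ (thickening δ s) < ε :=
    (tendsto_measure_thickening hfin).eventually (gt_mem_nhds (hs ▸ hε))
  obtain ⟨δ, hδ, hδpos⟩ := (hsmall.and self_mem_nhdsWithin).exists
  refine ⟨fun x => thickenedIndicator hδpos s x, by fun_prop, fun x hx => ?_, ?_⟩
  · simp [thickenedIndicator_one hδpos s hx]
  · refine lt_of_le_of_lt (measure_mono fun x hx => ?_) hδ
    by_contra hx'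
    have hzero : (thickenedIndicator hδpos s x : ℝ) = 0 := by
      rw [thickenedIndicator_zero hδpos s hx', NNReal.coe_zero]
    exact hx.ne' hzero

lemma measure_setOf_eventually_mem_le {α : Type*} [MeasurableSpace α] {μ : Measure α}
    {s : ℕ → Set α} {b : ℝ≥0∞} (hs : ∀ n, μ (s n) ≤ b) :
    μ {x | ∀ᶠ n in atTop, x ∈ s n} ≤ b := by
  have hunion : {x | ∀ᶠ n in atTop, x ∈ s n} = ⋃ N, ⋂ n ≥ N, s n := by
    ext x
    simp only [mem_ofPred_eq, eventually_atTop, mem_iUnion, mem_iInter]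
  have hmono : Monotone fun N => ⋂ n ≥ N, s n := fun N M hNM =>
    biInter_mono (fun n hn => le_trans hNM hn) fun _ _ => subset_rfl
  -- continuity from below holds for arbitrary, not necessarily measurable, monotone unions
  rw [hunion, hmono.measure_iUnion]
  exact iSup_le fun N => (measure_mono (biInter_subset_of_mem le_rfl)).trans (hs N)

lemma eventually_exists_mem_lt_of_mem_partialLim {X : Type*} {f : ℕ → X → Option ℝ} {x : X}
    {c y : ℝ} (hy : y ∈ partialLim f x) (hcy : c < y) :
    ∀ᶠ n in atTop, ∃ z ∈ f n x, c < z := by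
  simp only [partialLim, Option.mem_def] at hy
  split_ifs at hy with hconv
  obtain ⟨hdef, hlim⟩ := hconv
  have htends := hlim.choose_spec
  rw [Option.some_inj.mp hy] at htends
  filter_upwards [hdef, htends.eventually (eventually_gt_nhds hcy)] with n hsome hgt
  obtain ⟨z, hz⟩ := Option.isSome_iff_exists.mp hsome
  exact ⟨z, hz, by simpa [hz] using hgt⟩

lemma Partlims.measure_image_superlevel_le {X Y : Type*} [MeasurableSpace Y] {μ : Measure Y}
    {π : X → Y} {c : ℝ} {b : ℝ≥0∞} {A : Set (X → Option ℝ)}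
    (hA : ∀ p ∈ A, μ (π '' {x | ∃ y ∈ p x, c < y}) ≤ b) {p : X → Option ℝ}
    (hp : Partlims A p) : μ (π '' {x | ∃ y ∈ p x, c < y}) ≤ b := by
  induction hp with
  | base hpA => exact hA _ hpA
  | lim f _ ih =>
    refine (measure_mono ?_).trans (measure_setOf_eventually_mem_le ih)
    rintro _ ⟨x, ⟨y, hy, hcy⟩, rfl⟩
    filter_upwards [eventually_exists_mem_lt_of_mem_partialLim hy hcy] with n hn
    exact mem_image_of_mem π hn

lemma mem_closure_of_forall_finset_exists_eqOn {X β : Type*} [TopologicalSpace β]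
    {A : Set (X → β)} {f : X → β} (h : ∀ I : Finset X, ∃ g ∈ A, EqOn g f I) :
    f ∈ closure A := by
  rw [mem_closure_iff_nhds]
  intro s hs
  rw [nhds_pi, Filter.mem_pi] at hs
  obtain ⟨I, hI, t, ht, hts⟩ := hs
  obtain ⟨g, hgA, hgf⟩ := h hI.toFinset
  refine ⟨g, hts fun i hi => ?_, hgA⟩
  rw [hgf (hI.mem_toFinset.mpr hi)]
  exact mem_of_mem_nhds (ht i)

lemma volume_range_eq_zero {X : Type*} [TopologicalSpace X]
    (h : ∀ A : Set (X → ℝ), (∀ g ∈ A, Continuous g) →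
      ∀ f : X → ℝ, Continuous f → f ∈ closure A →
        Partlims (toPartial '' A) (toPartial f))
    {f : X → ℝ} (hf : Continuous f) : volume (range f) = 0 := by
  refine le_antisymm (ENNReal.le_of_forall_pos_le_add fun ε hε _ => ?_) bot_le
  set A : Set (X → ℝ) :=
    {φ | ∃ g : ℝ → ℝ, Continuous g ∧ volume {t | 0 < g t} ≤ ε ∧ φ = g ∘ f}
  have hAcont : ∀ φ ∈ A, Continuous φ := by
    rintro _ ⟨g, hg, -, rfl⟩
    exact hg.comp hf
  have hone : (fun _ => 1 : X → ℝ) ∈ closure A := by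
    refine mem_closure_of_forall_finset_exists_eqOn fun I => ?_
    have hfin : (f '' I).Finite := I.finite_toSet.image f
    obtain ⟨g, hg, hg1, hgε⟩ := exists_continuous_eqOn_one_measure_pos_lt (μ := volume)
      (by rw [hfin.isClosed.closure_eq]; exact hfin.measure_zero _)
      ⟨1, one_pos, hfin.isBounded.thickening.measure_lt_top.ne⟩ (ENNReal.coe_pos.mpr hε)
    exact ⟨g ∘ f, ⟨g, hg, hgε.le, rfl⟩, fun x hx => hg1 (mem_image_of_mem f hx)⟩
  have hbound : ∀ p ∈ toPartial '' A, volume (f '' {x | ∃ y ∈ p x, 0 < y}) ≤ ε := by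
    rintro _ ⟨_, ⟨g, -, hgε, rfl⟩, rfl⟩
    refine (measure_mono ?_).trans hgε
    rintro _ ⟨x, ⟨y, hy, hy0⟩, rfl⟩
    rw [toPartial, Option.mem_def, Option.some_inj] at hy
    subst hy
    exact hy0
  have hrange : f '' {x | ∃ y ∈ toPartial (fun _ => 1) x, 0 < y} = range f := by
    simp [toPartial]
  rw [zero_add, ← hrange]
  exact (h A hAcont _ continuous_const hone).measure_image_superlevel_le hbound

lemma isClopen_preimage_Iio_of_notMem_range {X : Type*} [TopologicalSpace X] {f : X → ℝ}
    (hf : Continuous f) {c : ℝ} (hc : c ∉ range f) : IsClopen (f ⁻¹' Iio c) := by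
  have hIio : f ⁻¹' Iio c = f ⁻¹' Iic c := by
    ext x
    simp only [mem_preimage, mem_Iio, mem_Iic]
    exact ⟨le_of_lt, fun hx => hx.lt_of_ne fun hxc => hc ⟨x, hxc⟩⟩
  exact ⟨hIio ▸ isClosed_Iic.preimage hf, isOpen_Iio.preimage hf⟩

theorem stmt14 {X : Type*} [TopologicalSpace X] [T35Space X]
    (h : ∀ A : Set (X → ℝ), (∀ g ∈ A, Continuous g) →
      ∀ f : X → ℝ, Continuous f → f ∈ closure A →
        Partlims (toPartial '' A) (toPartial f)) :
    (∀ x : X, ∀ U : Set X, IsOpen U → x ∈ U →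
      ∃ V : Set X, IsClopen V ∧ x ∈ V ∧ V ⊆ U) ∧
    ¬ ∃ φ : X → ↥(Set.Icc (0 : ℝ) 1), Continuous φ ∧ Function.Surjective φ := by
  constructor
  · intro x U hU hxU
    obtain ⟨f, hf, hfx, hfU⟩ := completelyRegularSpace_iff_isOpen.mp inferInstance x U hU hxU
    have hf' : Continuous fun z => (f z : ℝ) := continuous_subtype_val.comp hf
    obtain ⟨c, hc, hcf⟩ := not_subset.mp fun hsub : Ioo 0 1 ⊆ range fun z => (f z : ℝ) => by
      simpa using measure_mono_null hsub (volume_range_eq_zero h hf')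
    refine ⟨_, isClopen_preimage_Iio_of_notMem_range hf' hcf, ?_, fun z hz => ?_⟩
    · simpa [mem_preimage, hfx] using hc.1
    · by_contra hzU
      have : (f z : ℝ) = 1 := congrArg Subtype.val (hfU hzU)
      exact absurd hz (by simpa [this] using hc.2.le)
  · rintro ⟨φ, hφ, hsurj⟩
    have hrange : range (Subtype.val ∘ φ) = Icc 0 1 := by
      rw [range_comp, hsurj.range_eq, image_univ, Subtype.range_coe]
    simpa [hrange] using volume_range_eq_zero h (continuous_subtype_val.comp hφ)
end

section
/- For every topological space X and every open cover 𝒰 of X (with X ∉ 𝒰), if X ∈ LI(𝒰) then 𝒰 is an ω-cover of X. That is, Γ(X) ⊆ L(X) ⊆ Ω(X). -/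
open Filter Set

lemma Set.Finite.eventually_subset_of_subset_setLiminf {X : Type*} {B : ℕ → Set X} {F : Set X}
    (hF : F.Finite) (hFB : F ⊆ SetLiminf B) : ∀ᶠ n in atTop, F ⊆ B n :=
  ((eventually_all_finite hF).2 fun _ hx => mem_setLiminf_iff_eventually.1 (hFB hx)).mono
    fun _ hn x hx => hn x hx

lemma setLiminf_eq_univ_of_finite_notMem {X : Type*} {B : ℕ → Set X}
    (h : ∀ x, {n | x ∉ B n}.Finite) : SetLiminf B = univ :=
  eq_univ_of_forall fun x => mem_setLiminf_iff_eventually.2 <| by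
    rw [← Nat.cofinite_eq_atTop]
    exact eventually_cofinite.2 (h x)

theorem LI.exists_mem_superset_of_finite {X : Type*} {𝒰 : Set (Set X)} {A : Set X}
    (h : LI 𝒰 A) {F : Set X} (hF : F.Finite) (hFA : F ⊆ A) : ∃ U ∈ 𝒰, F ⊆ U := by
  induction h generalizing F with
  | base hU => exact ⟨_, hU, hFA⟩
  | lim B _ ih =>
    obtain ⟨n, hn⟩ := (hF.eventually_subset_of_subset_setLiminf hFA).exists
    exact ih n hF hn

theorem LI.univ_of_infinite_of_finite_notMem {X : Type*} {𝒰 : Set (Set X)} (hinf : 𝒰.Infinite)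
    (hfin : ∀ x, {U ∈ 𝒰 | x ∉ U}.Finite) : LI 𝒰 univ := by
  let e := hinf.natEmbedding
  let B : ℕ → Set X := fun n => e n
  have hB : ∀ x, {n | x ∉ B n}.Finite := fun x =>
    ((hfin x).preimage (Subtype.val_injective.comp e.injective).injOn).subset
      fun n hn => ⟨(e n).2, hn⟩
  simpa only [setLiminf_eq_univ_of_finite_notMem hB] using LI.lim B fun n => LI.base (e n).2

theorem stmt16_general {X : Type*} (𝒰 : Set (Set X)) :
    (𝒰.Infinite → (∀ x : X, {U ∈ 𝒰 | x ∉ U}.Finite) → LI 𝒰 Set.univ) ∧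
    (LI 𝒰 Set.univ → ∀ F : Set X, F.Finite → ∃ U ∈ 𝒰, F ⊆ U) :=
  ⟨LI.univ_of_infinite_of_finite_notMem,
    fun h _ hF => h.exists_mem_superset_of_finite hF (subset_univ _)⟩

theorem stmt16 {X : Type*} [TopologicalSpace X] (𝒰 : Set (Set X))
    (hopen : ∀ U ∈ 𝒰, IsOpen U) (hproper : ∀ U ∈ 𝒰, U ≠ Set.univ)
    (hcover : ⋃₀ 𝒰 = Set.univ) :
    (𝒰.Infinite → (∀ x : X, {U ∈ 𝒰 | x ∉ U}.Finite) → LI 𝒰 Set.univ) ∧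
    (LI 𝒰 Set.univ → ∀ F : Set X, F.Finite → ∃ U ∈ 𝒰, F ⊆ U) :=
  stmt16_general 𝒰
end

section
/- Let X be a topological space satisfying ⟨L→Γ⟩: for every open cover 𝒰 of X with X ∈ LI(𝒰), there exist U_1, U_2, … ∈ 𝒰 with X = liminf_n U_n. Then X satisfies S₁(Γ,Γ): for all open γ-covers 𝒰_1, 𝒰_2, … of X there are U_n ∈ 𝒰_n with X = liminf_n U_n. -/
/-- A γ-cover: an infinite family of proper subsets such that every point belongs to
all but finitely many members. -/
def IsGammaCover {X : Type*} (𝒰 : Set (Set X)) : Prop :=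
  𝒰.Infinite ∧ (∀ U ∈ 𝒰, U ≠ Set.univ) ∧ ∀ x : X, {U ∈ 𝒰 | x ∉ U}.Finite

open Set Filter

section

variable {X : Type*}

theorem mem_setLiminf {B : ℕ → Set X} {x : X} : x ∈ SetLiminf B ↔ ∀ᶠ n in atTop, x ∈ B n := by
  simp [SetLiminf, eventually_atTop]

theorem setLiminf_eq_univ {B : ℕ → Set X} : SetLiminf B = univ ↔ ∀ x, ∀ᶠ n in atTop, x ∈ B n := by
  simp only [eq_univ_iff_forall, mem_setLiminf]

theorem setLiminf_eq_univ_of_subset_comp {B C : ℕ → Set X} {φ : ℕ → ℕ}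
    (hB : SetLiminf B = univ) (hφ : Tendsto φ atTop atTop) (hBC : ∀ n, B (φ n) ⊆ C n) :
    SetLiminf C = univ :=
  setLiminf_eq_univ.2 fun x =>
    (hφ.eventually (setLiminf_eq_univ.1 hB x)).mono fun n hn => hBC n hn

theorem tendsto_atTop_of_subset_ne_univ {V W : ℕ → Set X} {f : ℕ → ℕ}
    (hV : SetLiminf V = univ) (hW : ∀ m, W m ≠ univ) (hVW : ∀ j, V j ⊆ W (f j)) :
    Tendsto f atTop atTop := by
  choose x hx using fun m => (ne_univ_iff_exists_notMem (W m)).1 (hW m)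
  refine tendsto_atTop.2 fun n => ?_
  have hxV : ∀ᶠ j in atTop, ∀ m ∈ Finset.range n, x m ∈ V j :=
    (eventually_all_finset _).2 fun m _ => setLiminf_eq_univ.1 hV (x m)
  filter_upwards [hxV] with j hj
  by_contra! hlt
  exact hx _ (hVW j (hj _ (Finset.mem_range.2 hlt)))

theorem exists_seq_eventually_mem {𝒰 : Set (Set X)} (hinf : 𝒰.Infinite)
    (hfin : ∀ x, {U ∈ 𝒰 | x ∉ U}.Finite) :
    ∃ U : ℕ → Set X, (∀ k, U k ∈ 𝒰) ∧ ∀ x, ∀ᶠ k in atTop, x ∈ U k := by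
  let e := hinf.natEmbedding
  have he : Function.Injective fun k => (e k : Set X) :=
    Subtype.coe_injective.comp e.injective
  refine ⟨fun k => e k, fun k => (e k).2, fun x => ?_⟩
  rw [← Nat.cofinite_eq_atTop, eventually_cofinite]
  exact ((hfin x).preimage he.injOn).subset fun k hk => ⟨(e k).2, hk⟩

variable (U : ℕ → ℕ → Set X)

def diagInter (m k : ℕ) : Set X := ⋂ i ∈ Finset.range (m + 1), U i k

def diagCover : Set (Set X) := range fun p : ℕ × ℕ => diagInter U p.1 p.2 ∩ U 0 p.1

variable {U}

theorem isOpen_of_mem_diagCover [TopologicalSpace X] (hU : ∀ n k, IsOpen (U n k)) :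
    ∀ V ∈ diagCover U, IsOpen V := by
  rintro _ ⟨⟨m, k⟩, rfl⟩
  exact (isOpen_biInter_finset fun i _ => hU i k).inter (hU 0 m)

theorem ne_univ_of_mem_diagCover (hU : ∀ m, U 0 m ≠ univ) : ∀ V ∈ diagCover U, V ≠ univ := by
  rintro _ ⟨⟨m, k⟩, rfl⟩ hV
  exact hU m (univ_subset_iff.1 (hV.symm ▸ inter_subset_right))

theorem eventually_eventually_mem_diagCover (hU : ∀ n x, ∀ᶠ k in atTop, x ∈ U n k) (x : X) :
    ∀ᶠ m in atTop, ∀ᶠ k in atTop, x ∈ diagInter U m k ∩ U 0 m := by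
  filter_upwards [hU 0 x] with m hm
  have hinter : ∀ᶠ k in atTop, x ∈ diagInter U m k := by
    simpa only [diagInter, mem_iInter₂] using (eventually_all_finset _).2 fun i _ => hU i x
  exact hinter.mono fun k hk => ⟨hk, hm⟩

theorem sUnion_diagCover (hU : ∀ n x, ∀ᶠ k in atTop, x ∈ U n k) : ⋃₀ diagCover U = univ := by
  refine eq_univ_of_forall fun x => ?_
  obtain ⟨m, hm⟩ := (eventually_eventually_mem_diagCover hU x).exists
  obtain ⟨k, hx⟩ := hm.exists
  exact ⟨_, ⟨(m, k), rfl⟩, hx⟩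

theorem li_diagCover_univ (hU : ∀ n x, ∀ᶠ k in atTop, x ∈ U n k) : LI (diagCover U) univ := by
  have hlim := LI.lim _ fun m => LI.lim _ fun k => LI.base (𝒰 := diagCover U) ⟨(m, k), rfl⟩
  rwa [setLiminf_eq_univ.2 fun x => (eventually_eventually_mem_diagCover hU x).mono
    fun m hm => mem_setLiminf.2 hm] at hlim

theorem exists_selection_of_diagCover (hU : ∀ m, U 0 m ≠ univ) {V : ℕ → Set X}
    (hVmem : ∀ j, V j ∈ diagCover U) (hV : SetLiminf V = univ) :
    ∃ k : ℕ → ℕ, SetLiminf (fun n => U n (k n)) = univ := by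
  choose p hp using hVmem
  have hlevel : Tendsto (fun j => (p j).1) atTop atTop :=
    tendsto_atTop_of_subset_ne_univ hV hU fun j => hp j ▸ inter_subset_right
  choose j hj using fun n => ((eventually_ge_atTop n).and (tendsto_atTop.1 hlevel n)).exists
  refine ⟨fun n => (p (j n)).2, setLiminf_eq_univ_of_subset_comp hV
    (tendsto_atTop_mono (fun n => (hj n).1) tendsto_id) fun n => ?_⟩
  rw [← hp]
  exact inter_subset_left.trans <| biInter_subset_of_mem <|
    Finset.mem_range.2 (Nat.lt_succ_of_le (hj n).2)

end

theorem stmt17 {X : Type*} [TopologicalSpace X]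
    (h : ∀ 𝒰 : Set (Set X), (∀ U ∈ 𝒰, IsOpen U) → (∀ U ∈ 𝒰, U ≠ Set.univ) →
      ⋃₀ 𝒰 = Set.univ → LI 𝒰 Set.univ →
      ∃ U : ℕ → Set X, (∀ n, U n ∈ 𝒰) ∧ SetLiminf U = Set.univ) :
    ∀ 𝒰 : ℕ → Set (Set X),
      (∀ n, (∀ U ∈ 𝒰 n, IsOpen U) ∧ IsGammaCover (𝒰 n)) →
      ∃ U : ℕ → Set X, (∀ n, U n ∈ 𝒰 n) ∧ SetLiminf U = Set.univ := by
  intro 𝒰 h𝒰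
  choose U hU𝒰 hUev using fun n => exists_seq_eventually_mem (h𝒰 n).2.1 (h𝒰 n).2.2.2
  have hUopen : ∀ n k, IsOpen (U n k) := fun n k => (h𝒰 n).1 _ (hU𝒰 n k)
  have hUne : ∀ m, U 0 m ≠ univ := fun m => (h𝒰 0).2.2.1 _ (hU𝒰 0 m)
  obtain ⟨V, hVmem, hV⟩ := h (diagCover U) (isOpen_of_mem_diagCover hUopen)
    (ne_univ_of_mem_diagCover hUne) (sUnion_diagCover hUev) (li_diagCover_univ hUev)
  obtain ⟨k, hk⟩ := exists_selection_of_diagCover hUne hVmem hV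
  exact ⟨fun n => U n (k n), fun n => hU𝒰 n (k n), hk⟩
end

section
/- Assume Jordan's fusion lemma: if B = ⋃_n B_n is an increasing union where each B_n satisfies S₁(Γ,Γ), and U^n_m are open sets with B_n ⊆ liminf_m U^n_m for each n, then there exist m_1, m_2, … with B ⊆ liminf_n U^n_{m_n}. Then the property ⟨L→Γ⟩ is preserved by countable increasing unions: if X_1 ⊆ X_2 ⊆ … all satisfy ⟨L→Γ⟩ and each satisfies S₁(Γ,Γ), then X = ⋃_n X_n satisfies ⟨L→Γ⟩. -/
/-- The selection property S₁(Γ,Γ) of a topological space: from every sequence of open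
γ-covers one can select one member from each so that the selections form a γ-cover. -/
def S1GammaGamma (X : Type*) [TopologicalSpace X] : Prop :=
  ∀ 𝒰 : ℕ → Set (Set X), (∀ n, (∀ U ∈ 𝒰 n, IsOpen U) ∧ IsGammaCover (𝒰 n)) →
    ∃ U : ℕ → Set X, (∀ n, U n ∈ 𝒰 n) ∧ SetLiminf U = Set.univ

/-- The property ⟨L→Γ⟩ of a topological space: every open cover 𝒰 with X ∈ LI(𝒰)
contains a sequence whose liminf is the whole space. -/
def LtoGamma (X : Type*) [TopologicalSpace X] : Prop :=
  ∀ 𝒰 : Set (Set X), (∀ U ∈ 𝒰, IsOpen U) → (∀ U ∈ 𝒰, U ≠ Set.univ) →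
    ⋃₀ 𝒰 = Set.univ → LI 𝒰 Set.univ →
    ∃ U : ℕ → Set X, (∀ n, U n ∈ 𝒰) ∧ SetLiminf U = Set.univ

/-!
Trace the cover on each `Xs n`: either one member already contains `Xs n`, or the traces form
a cover of `Xs n` by proper open subsets that still generates `Xs n` under liminfs, since
preimages commute with liminfs. Either way ⟨L→Γ⟩ of `Xs n` yields a sequence from the cover
whose liminf contains `Xs n`, and the fusion lemma diagonalises these sequences.
-/

open Set

lemma preimage_setLiminf {X Y : Type*} (f : Y → X) (B : ℕ → Set X) :
    f ⁻¹' SetLiminf B = SetLiminf (fun n => f ⁻¹' B n) := by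
  simp only [SetLiminf, preimage_iUnion, preimage_iInter]

lemma setLiminf_const {X : Type*} (U : Set X) : SetLiminf (fun _ : ℕ => U) = U := by
  ext x
  simp only [SetLiminf, mem_iUnion, mem_iInter]
  exact ⟨fun ⟨m, h⟩ => h m le_rfl, fun h => ⟨0, fun _ _ => h⟩⟩

lemma LI.preimage {X Y : Type*} {𝒰 : Set (Set X)} {A : Set X} (h : LI 𝒰 A) (f : Y → X) :
    LI ((f ⁻¹' ·) '' 𝒰) (f ⁻¹' A) := by
  induction h with
  | base hU => exact LI.base ⟨_, hU, rfl⟩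
  | lim B _ ih =>
    rw [preimage_setLiminf]
    exact LI.lim _ ih

lemma LtoGamma.exists_subset_setLiminf {X : Type*} [TopologicalSpace X] {Y : Set X}
    (hY : LtoGamma Y) {𝒰 : Set (Set X)} (hopen : ∀ U ∈ 𝒰, IsOpen U) (hcover : ⋃₀ 𝒰 = univ)
    (hLI : LI 𝒰 univ) : ∃ U : ℕ → Set X, (∀ n, U n ∈ 𝒰) ∧ Y ⊆ SetLiminf U := by
  by_cases hc : ∃ U ∈ 𝒰, Y ⊆ U
  · obtain ⟨U, hU, hYU⟩ := hc
    exact ⟨fun _ => U, fun _ => hU, by rwa [setLiminf_const]⟩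
  push Not at hc
  set 𝒱 : Set (Set Y) := ((Subtype.val : Y → X) ⁻¹' ·) '' 𝒰
  have hopen𝒱 : ∀ V ∈ 𝒱, IsOpen V := by
    rintro _ ⟨U, hU, rfl⟩
    exact (hopen U hU).preimage continuous_subtype_val
  have hproper𝒱 : ∀ V ∈ 𝒱, V ≠ univ := by
    rintro _ ⟨U, hU, rfl⟩ hUY
    exact hc U hU fun x hx => (hUY ▸ mem_univ (⟨x, hx⟩ : Y) :)
  have hcover𝒱 : ⋃₀ 𝒱 = univ := by
    rw [sUnion_image, ← preimage_iUnion₂, ← sUnion_eq_biUnion, hcover, preimage_univ]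
  have hLI𝒱 : LI 𝒱 univ := by simpa using hLI.preimage (Subtype.val : Y → X)
  obtain ⟨W, hW, hWlim⟩ := hY 𝒱 hopen𝒱 hproper𝒱 hcover𝒱 hLI𝒱
  choose V hV hVW using hW
  refine ⟨V, hV, fun x hx => ?_⟩
  have hxW : (⟨x, hx⟩ : Y) ∈ SetLiminf W := hWlim ▸ mem_univ _
  rwa [← funext hVW, ← preimage_setLiminf] at hxW

theorem stmt18 {X : Type*} [TopologicalSpace X]
    (jordan : ∀ B : ℕ → Set X, (∀ n, B n ⊆ B (n + 1)) →
      (∀ n, S1GammaGamma (B n)) →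
      ∀ U : ℕ → ℕ → Set X, (∀ n m, IsOpen (U n m)) →
        (∀ n, B n ⊆ SetLiminf (U n)) →
        ∃ m : ℕ → ℕ, (⋃ n, B n) ⊆ SetLiminf (fun n => U n (m n)))
    (Xs : ℕ → Set X) (hmono : ∀ n, Xs n ⊆ Xs (n + 1))
    (hLG : ∀ n, LtoGamma (Xs n)) (hS1 : ∀ n, S1GammaGamma (Xs n))
    (hunion : (⋃ n, Xs n) = Set.univ) :
    LtoGamma X := by
  intro 𝒰 hopen _ hcover hLI
  choose U hU hXsU using fun n => (hLG n).exists_subset_setLiminf hopen hcover hLI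
  obtain ⟨m, hm⟩ := jordan Xs hmono hS1 U (fun n k => hopen _ (hU n k)) hXsU
  exact ⟨fun n => U n (m n), fun n => hU n (m n), univ_subset_iff.mp (hunion ▸ hm)⟩
end
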